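/- Let Λ be a type, let n ≥ 1, let ℓ₀,…,ℓₙ ∈ Λ, and for each 0 ≤ i ≤ n−1 let wᵢ be a nonempty finite word over Λ whose first letter is ℓᵢ, whose last letter is ℓᵢ₊₁, and which changes value at most once (i.e., destutter(wᵢ) has length at most 2). Then destutter(w₀ · tail(w₁) · ⋯ · tail(w₍ₙ₋₁₎)) = destutter(ℓ₀,ℓ₁,…,ℓₙ), where · denotes concatenation and tail removes the first letter. (This is the combinatorial content of Lemma 1: a trace of a trace-inclusive Kripke structure, whose transitions are realized by trajectory segments each changing label at most once and agreeing with the trace labels at their endpoints, produces after concatenation a label word whose destuttering equals the destuttering of the trace's word.) -/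
import Mathlib

section Aux

variable {Λ : Type*} [DecidableEq Λ]

private lemma getLast?_cons_eq (a : Λ) (l : List Λ) :
    (a :: l).getLast? = some (l.getLastD a) := by
  rw [List.getLast?_cons]
  simp [List.getLastD_eq_getLast?]

private lemma destutter'_exists_cons (l : List Λ) (a : Λ) :
    ∃ r, l.destutter' (· ≠ ·) a = a :: r := by
  induction l generalizing a with
  | nil => exact ⟨[], rfl⟩
  | cons b t ih =>
    rw [List.destutter'_cons]
    split_ifs with h
    · exact ⟨_, rfl⟩
    · exact ih a

private lemma destutter'_getLastD (l : List Λ) (a c : Λ) :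
    (l.destutter' (· ≠ ·) a).getLastD c = l.getLastD a := by
  induction l generalizing a c with
  | nil => rfl
  | cons b t ih =>
    rw [List.destutter'_cons]
    split_ifs with h
    · rw [List.getLastD_cons, List.getLastD_cons]
      exact ih b a
    · have hb : a = b := not_not.mp h
      subst hb
      rw [ih a c, List.getLastD_cons]

private lemma destutter'_getLast? (l : List Λ) (a : Λ) :
    (l.destutter' (· ≠ ·) a).getLast? = (a :: l).getLast? := by
  obtain ⟨r, hr⟩ := destutter'_exists_cons l a
  have h := destutter'_getLastD l a a
  rw [hr, List.getLastD_cons] at h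
  rw [hr, getLast?_cons_eq, getLast?_cons_eq, h]

/-- destuttering of an append splits along the last element of the first part. -/
private lemma destutter'_append (A X : List Λ) (a : Λ) :
    (A ++ X).destutter' (· ≠ ·) a =
      A.destutter' (· ≠ ·) a ++ (X.destutter' (· ≠ ·) (A.getLastD a)).tail := by
  induction A generalizing a with
  | nil =>
    obtain ⟨r, hr⟩ := destutter'_exists_cons X a
    simp [hr]
  | cons b A' ih =>
    rw [List.cons_append, List.destutter'_cons, List.destutter'_cons, List.getLastD_cons]
    split_ifs with h
    · rw [ih b, List.cons_append]
    · have hb : a = b := not_not.mp h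
      subst hb
      rw [ih a]

/-- The key structural fact about a word that changes value at most once:
its tail destutters (relative to its head) like the single-letter word of its last letter. -/
private lemma destutter'_tail_eq (t : List Λ) (a b : Λ)
    (hlast : t.getLastD a = b)
    (hlen : ((a :: t).destutter (· ≠ ·)).length ≤ 2) :
    t.destutter' (· ≠ ·) a = [b].destutter' (· ≠ ·) a := by
  induction t generalizing a with
  | nil =>
    simp only [List.getLastD] at hlast
    subst hlast
    simp
  | cons y t' ih =>
    rw [List.getLastD_cons] at hlast
    by_cases h : a = y
    · subst h
      have hlen' : ((a :: t').destutter (· ≠ ·)).length ≤ 2 := by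
        rw [List.destutter_cons'] at hlen ⊢
        rwa [List.destutter'_cons, if_neg (by simp)] at hlen
      have := ih a hlast hlen'
      rwa [List.destutter'_cons, if_neg (by simp)]
    · -- a ≠ y : then destutter' y t' must be [y] and y = b
      have hda : (a :: y :: t').destutter (· ≠ ·) = a :: (t'.destutter' (· ≠ ·) y) := by
        rw [List.destutter_cons', List.destutter'_cons, if_pos h]
      rw [hda] at hlen
      obtain ⟨r, hr⟩ := destutter'_exists_cons t' y
      have hr0 : r = [] := by
        rw [hr] at hlen
        simp only [List.length_cons] at hlen
        exact List.length_eq_zero_iff.mp (by omega)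
      have hyb : y = b := by
        have hgl := destutter'_getLastD t' y y
        rw [hr, hr0, List.getLastD_cons] at hgl
        rw [← hlast, ← hgl]
        rfl
      subst hyb
      rw [List.destutter'_cons, if_pos h, hr, hr0]
      rw [List.destutter'_singleton, if_pos h]

private lemma getLast?_map_range (ℓ : ℕ → Λ) (n : ℕ) :
    ((List.range (n + 1)).map ℓ).getLast? = some (ℓ n) := by
  rw [List.range_succ, List.map_append]
  simp

end Aux

/-- A trace of a trace-inclusive Kripke structure, whose transitions are
realized by word segments `w i` each changing value at most once (destuttered length ≤ 2)
and agreeing with the trace labels `ℓ i`, `ℓ (i+1)` at their endpoints, produces after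
concatenation (with the first letters of the later segments dropped) a word whose
destuttering equals the destuttering of the trace's word `ℓ 0, …, ℓ n`. -/
theorem destutter_concat_of_segments {Λ : Type*} [DecidableEq Λ]
    (n : ℕ) (hn : 1 ≤ n) (ℓ : ℕ → Λ) (w : ℕ → List Λ)
    (hne : ∀ i < n, w i ≠ [])
    (hhead : ∀ i < n, (w i).head? = some (ℓ i))
    (hlast : ∀ i < n, (w i).getLast? = some (ℓ (i + 1)))
    (hchange : ∀ i < n, ((w i).destutter (· ≠ ·)).length ≤ 2) :
    (((List.range n).map (fun i => if i = 0 then w 0 else (w i).tail)).flatten).destutter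
        (· ≠ ·) =
      (((List.range (n + 1)).map ℓ).destutter (· ≠ ·)) := by
  induction n, hn using Nat.le_induction with
  | base =>
    have h0 : (0 : ℕ) < 1 := one_pos
    obtain ⟨t, ht⟩ : ∃ t, w 0 = ℓ 0 :: t := by
      cases hw : w 0 with
      | nil => exact absurd hw (hne 0 h0)
      | cons c t =>
        have := hhead 0 h0
        rw [hw] at this
        simp only [List.head?_cons, Option.some.injEq] at this
        exact ⟨t, by rw [this]⟩
    have hL : t.getLastD (ℓ 0) = ℓ 1 := by
      have := hlast 0 h0
      rw [ht, getLast?_cons_eq] at this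
      exact Option.some_injective _ this
    have hlen : ((ℓ 0 :: t).destutter (· ≠ ·)).length ≤ 2 := by
      have := hchange 0 h0; rwa [ht] at this
    have key := destutter'_tail_eq t (ℓ 0) (ℓ 1) hL hlen
    have hflat : ((List.range 1).map (fun i => if i = 0 then w 0 else (w i).tail)).flatten
        = w 0 := by simp [List.range_succ]
    have hmap : (List.range 2).map ℓ = [ℓ 0, ℓ 1] := by
      simp [List.range_succ]
    rw [hflat, hmap, ht, List.destutter_cons', key]
    rfl
  | succ n hn1 ih =>
    -- shrink hypotheses to `i < n`
    have hne' : ∀ i < n, w i ≠ [] := fun i hi => hne i (Nat.lt_succ_of_lt hi)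
    have hhead' : ∀ i < n, (w i).head? = some (ℓ i) := fun i hi => hhead i (Nat.lt_succ_of_lt hi)
    have hlast' : ∀ i < n, (w i).getLast? = some (ℓ (i + 1)) :=
      fun i hi => hlast i (Nat.lt_succ_of_lt hi)
    have hchange' : ∀ i < n, ((w i).destutter (· ≠ ·)).length ≤ 2 :=
      fun i hi => hchange i (Nat.lt_succ_of_lt hi)
    have IH := ih hne' hhead' hlast' hchange'
    set f : ℕ → List Λ := fun i => if i = 0 then w 0 else (w i).tail with hf
    have hFsplit : ((List.range (n + 1)).map f).flatten
        = ((List.range n).map f).flatten ++ (w n).tail := by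
      rw [List.range_succ, List.map_append, List.flatten_append]
      have : f n = (w n).tail := by
        rw [hf]; simp only [if_neg (by omega : ¬ n = 0)]
      simp [this]
    have hBsplit : (List.range (n + 1 + 1)).map ℓ = (List.range (n + 1)).map ℓ ++ [ℓ (n + 1)] := by
      rw [List.range_succ, List.map_append]
      simp
    -- F n is nonempty, starting with ℓ 0
    obtain ⟨t0, ht0⟩ : ∃ t, w 0 = ℓ 0 :: t := by
      have h0 : (0 : ℕ) < n := hn1
      cases hw : w 0 with
      | nil => exact absurd hw (hne' 0 h0)
      | cons c t =>
        have := hhead' 0 h0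
        rw [hw] at this
        simp only [List.head?_cons, Option.some.injEq] at this
        exact ⟨t, by rw [this]⟩
    obtain ⟨F', hF'⟩ : ∃ F', ((List.range n).map f).flatten = ℓ 0 :: F' := by
      obtain ⟨m, hm⟩ : ∃ m, n = m + 1 := ⟨n - 1, by omega⟩
      subst hm
      rw [List.range_succ_eq_map, List.map_cons, List.flatten_cons]
      have : f 0 = w 0 := by rw [hf]; simp
      rw [this, ht0]
      exact ⟨t0 ++ _, rfl⟩
    -- B (= map ℓ (range (n+1))) is nonempty, starting with ℓ 0
    obtain ⟨B', hB'⟩ : ∃ B', (List.range (n + 1)).map ℓ = ℓ 0 :: B' := by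
      rw [List.range_succ_eq_map, List.map_cons]
      exact ⟨_, rfl⟩
    -- last element of F n is ℓ n
    have hlastB : ((List.range (n + 1)).map ℓ).getLast? = some (ℓ n) := getLast?_map_range ℓ n
    have hlastF : (((List.range n).map f).flatten).getLast? = some (ℓ n) := by
      have h1 : (((List.range n).map f).flatten.destutter (· ≠ ·)).getLast?
          = (((List.range n).map f).flatten).getLast? := by
        rw [hF', List.destutter_cons', destutter'_getLast?]
      have h2 : ((((List.range (n + 1)).map ℓ).destutter (· ≠ ·))).getLast?
          = ((List.range (n + 1)).map ℓ).getLast? := by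
        rw [hB', List.destutter_cons', destutter'_getLast?, ← hB']
      rw [← h1, IH, h2, hlastB]
    -- tail of w n behaves like [ℓ (n+1)] after ℓ n
    obtain ⟨tn, htn⟩ : ∃ t, w n = ℓ n :: t := by
      have h0 : n < n + 1 := Nat.lt_succ_self n
      cases hw : w n with
      | nil => exact absurd hw (hne n h0)
      | cons c t =>
        have := hhead n h0
        rw [hw] at this
        simp only [List.head?_cons, Option.some.injEq] at this
        exact ⟨t, by rw [this]⟩
    have hLn : tn.getLastD (ℓ n) = ℓ (n + 1) := by
      have := hlast n (Nat.lt_succ_self n)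
      rw [htn, getLast?_cons_eq] at this
      exact Option.some_injective _ this
    have hlenn : ((ℓ n :: tn).destutter (· ≠ ·)).length ≤ 2 := by
      have := hchange n (Nat.lt_succ_self n); rwa [htn] at this
    have key := destutter'_tail_eq tn (ℓ n) (ℓ (n + 1)) hLn hlenn
    -- getLastD facts from getLast?
    have hgF : F'.getLastD (ℓ 0) = ℓ n := by
      rw [hF', getLast?_cons_eq] at hlastF
      exact Option.some_injective _ hlastF
    have hgB : B'.getLastD (ℓ 0) = ℓ n := by
      rw [hB', getLast?_cons_eq] at hlastB
      exact Option.some_injective _ hlastB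
    calc (((List.range (n + 1)).map f).flatten).destutter (· ≠ ·)
        = ((ℓ 0 :: F') ++ (w n).tail).destutter (· ≠ ·) := by rw [hFsplit, hF']
      _ = (ℓ 0 :: (F' ++ (w n).tail)).destutter (· ≠ ·) := by rw [List.cons_append]
      _ = (F' ++ (w n).tail).destutter' (· ≠ ·) (ℓ 0) := by rw [List.destutter_cons']
      _ = F'.destutter' (· ≠ ·) (ℓ 0)
            ++ (((w n).tail).destutter' (· ≠ ·) (ℓ n)).tail := by
            rw [destutter'_append, hgF]
      _ = F'.destutter' (· ≠ ·) (ℓ 0)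
            ++ (([ℓ (n + 1)]).destutter' (· ≠ ·) (ℓ n)).tail := by
            rw [htn]; simp only [List.tail_cons]; rw [key]
      _ = B'.destutter' (· ≠ ·) (ℓ 0)
            ++ (([ℓ (n + 1)]).destutter' (· ≠ ·) (ℓ n)).tail := by
            have heq : F'.destutter' (· ≠ ·) (ℓ 0) = B'.destutter' (· ≠ ·) (ℓ 0) := by
              have hIH := IH
              rw [hF', hB', List.destutter_cons', List.destutter_cons'] at hIH
              exact hIH
            rw [heq]
      _ = (B' ++ [ℓ (n + 1)]).destutter' (· ≠ ·) (ℓ 0) := by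
            rw [destutter'_append, hgB]
      _ = ((ℓ 0 :: B') ++ [ℓ (n + 1)]).destutter (· ≠ ·) := by
            rw [List.cons_append, List.destutter_cons']
      _ = ((List.range (n + 1 + 1)).map ℓ).destutter (· ≠ ·) := by rw [hBsplit, hB']
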